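/- For every real δ with 0 < δ < 1 and every integer p ≥ 3, setting τ = g_{p/2}(δ) = 2√δ cos(2π/p), one has H_p(τ,δ) = (δ^{p/2} − 1)/((δ − τ + 1) δ^{(p−2)/2}); in particular H_p(g_{p/2}(δ), δ) < 0. -/

import Mathlib

/-!
Context: given real τ, δ with δ > 0, let λ₁ = (τ + √(τ²−4δ))/2 and
λ₂ = (τ − √(τ²−4δ))/2 (complex principal square root).
H_p(τ,δ) = Σ_{j=1}^{p−1} Σ_{k=1}^{j} λ₁^{k−j} λ₂^{1−k}.
g_q(δ) = 2√δ cos(π/q).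
-/

/-- λ₁ = (τ + √(τ²−4δ))/2, using the complex principal square root. -/
noncomputable def lam1 (τ δ : ℝ) : ℂ :=
  ((τ : ℂ) + ((τ : ℂ) ^ 2 - 4 * (δ : ℂ)) ^ ((1 : ℂ) / 2)) / 2

/-- λ₂ = (τ − √(τ²−4δ))/2, using the complex principal square root. -/
noncomputable def lam2 (τ δ : ℝ) : ℂ :=
  ((τ : ℂ) - ((τ : ℂ) ^ 2 - 4 * (δ : ℂ)) ^ ((1 : ℂ) / 2)) / 2

/-- H_p(τ,δ) = Σ_{j=1}^{p−1} Σ_{k=1}^{j} λ₁^{k−j} λ₂^{1−k}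
(indices shifted: j = j'+1, k = k'+1). -/
noncomputable def Hp (p : ℕ) (τ δ : ℝ) : ℂ :=
  ∑ j ∈ Finset.range (p - 1), ∑ k ∈ Finset.range (j + 1),
    lam1 τ δ ^ ((k : ℤ) - (j : ℤ)) * lam2 τ δ ^ (-(k : ℤ))

/-!
With `s = √δ` and `ω = exp (2πi/p)`, the roots are `λ₁ = sω` and `λ₂ = sω⁻¹`. Put `a = λ₁⁻¹`,
`b = λ₂⁻¹`; the inner sums of `H_p` are `∑ₖ a^(j-k) b^k = (b^(j+1) - a^(j+1)) / (b - a)`, so `H_p`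
is a difference of two geometric series divided by `b - a`. Because `a^p = b^p = s^(-p)`, that
difference is `(b - a)(1 - s^(-p)) / ((a - 1)(b - 1))`, and `(a - 1)(b - 1) = (δ - τ + 1)/δ` by
Vieta. Finally `δ - τ + 1 ≥ (1 - s)² > 0` while `s^p < 1`.
-/

open Finset Complex
open scoped Real

lemma Complex.ofReal_cpow_one_div_two_of_nonpos {x : ℝ} (hx : x ≤ 0) :
    (x : ℂ) ^ ((1 : ℂ) / 2) = √(-x) * I := by
  rw [ofReal_cpow_of_nonpos hx, ← ofReal_neg, show (1 : ℂ) / 2 = ((1 / 2 : ℝ) : ℂ) by norm_num,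
    ← ofReal_cpow (neg_nonneg.2 hx), ← Real.sqrt_eq_rpow,
    show (π : ℂ) * I * ((1 / 2 : ℝ) : ℂ) = ((π / 2 : ℝ) : ℂ) * I by push_cast; ring,
    exp_mul_I, ← ofReal_cos, ← ofReal_sin, Real.cos_pi_div_two, Real.sin_pi_div_two]
  simp

lemma lam1_add_lam2 (τ δ : ℝ) : lam1 τ δ + lam2 τ δ = τ := by
  rw [lam1, lam2]; ring

lemma lam1_mul_lam2 (τ δ : ℝ) : lam1 τ δ * lam2 τ δ = δ := by
  have hsq : (((τ : ℂ) ^ 2 - 4 * δ) ^ ((1 : ℂ) / 2)) ^ 2 = (τ : ℂ) ^ 2 - 4 * δ := by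
    rw [one_div]; exact cpow_ofNat_inv_pow _ 2
  rw [lam1, lam2]; linear_combination (-1 / 4 : ℂ) * hsq

lemma lam1_lam2_eq_sqrt_mul_exp {δ θ : ℝ} (hδ : 0 ≤ δ) (hθ : 0 ≤ Real.sin θ) :
    lam1 (2 * √δ * Real.cos θ) δ = √δ * exp (θ * I) ∧
      lam2 (2 * √δ * Real.cos θ) δ = √δ * exp (-(θ * I)) := by
  have hdisc : ((2 * √δ * Real.cos θ : ℝ) ^ 2 - 4 * δ : ℂ) ^ ((1 : ℂ) / 2)
      = 2 * √δ * Real.sin θ * I := by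
    have h : (2 * √δ * Real.cos θ) ^ 2 - 4 * δ = -(2 * √δ * Real.sin θ) ^ 2 := by
      nlinarith [Real.sq_sqrt hδ, Real.sin_sq_add_cos_sq θ]
    rw [show ((2 * √δ * Real.cos θ : ℝ) ^ 2 - 4 * δ : ℂ)
        = ((-(2 * √δ * Real.sin θ) ^ 2 : ℝ) : ℂ) by rw [← h]; push_cast; ring,
      ofReal_cpow_one_div_two_of_nonpos (by nlinarith), neg_neg, Real.sqrt_sq (by positivity)]
    push_cast; ring
  rw [lam1, lam2, hdisc, ← neg_mul, exp_mul_I, exp_mul_I, cos_neg, sin_neg]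
  push_cast
  constructor <;> ring

lemma zpow_sub_mul_zpow_neg {K : Type*} [DivisionRing K] (x y : K) {j k : ℕ} (hkj : k ≤ j) :
    x ^ ((k : ℤ) - j) * y ^ (-(k : ℤ)) = x⁻¹ ^ (j - k) * y⁻¹ ^ k := by
  rw [show (k : ℤ) - j = -((j - k : ℕ) : ℤ) by omega, zpow_neg, zpow_neg, zpow_natCast,
    zpow_natCast, inv_pow, inv_pow]

lemma sum_range_sum_range_pow_mul_pow_of_pow_eq {K : Type*} [Field K] {a b c : K} {n : ℕ}
    (ha : a ^ (n + 1) = c) (hb : b ^ (n + 1) = c) (hab : a ≠ b) (ha1 : a ≠ 1) (hb1 : b ≠ 1) :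
    ∑ j ∈ range n, ∑ k ∈ range (j + 1), a ^ (j - k) * b ^ k = (1 - c) / ((a - 1) * (b - 1)) := by
  have hinner : ∀ j, (∑ k ∈ range (j + 1), a ^ (j - k) * b ^ k) * (b - a)
      = b ^ (j + 1) - a ^ (j + 1) := fun j => by
    rw [← geom_sum₂_mul]; congr 1; refine sum_congr rfl fun k _ => ?_
    rw [Nat.add_sub_cancel, mul_comm]
  have hgeom : ∀ x : K, (∑ j ∈ range n, x ^ (j + 1)) * (x - 1) = x ^ (n + 1) - x := fun x => by
    simp_rw [pow_succ', ← mul_sum, mul_assoc, geom_sum_mul]; ring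
  have hS : (∑ j ∈ range n, ∑ k ∈ range (j + 1), a ^ (j - k) * b ^ k) * (b - a)
      = ∑ j ∈ range n, b ^ (j + 1) - ∑ j ∈ range n, a ^ (j + 1) := by
    rw [sum_mul, ← sum_sub_distrib]; exact sum_congr rfl fun j _ => hinner j
  rw [eq_div_iff (mul_ne_zero (sub_ne_zero.2 ha1) (sub_ne_zero.2 hb1))]
  refine mul_right_cancel₀ (sub_ne_zero.2 hab.symm) ?_
  linear_combination (a - 1) * (b - 1) * hS + (a - 1) * hgeom b - (b - 1) * hgeom a
    + (a - 1) * hb - (b - 1) * ha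

lemma Hp_eq_of_lam_pow_eq {p : ℕ} {τ δ : ℝ} (hp : p ≠ 0) (hδ : δ ≠ 0)
    (hpow : lam1 τ δ ^ p = lam2 τ δ ^ p) (hne : lam1 τ δ ≠ lam2 τ δ)
    (h1 : lam1 τ δ ≠ 1) (h2 : lam2 τ δ ≠ 1) :
    Hp p τ δ = δ * (1 - (lam1 τ δ ^ p)⁻¹) / (δ - τ + 1) := by
  have hprod : lam1 τ δ * lam2 τ δ ≠ 0 := by rw [lam1_mul_lam2]; exact_mod_cast hδ
  have hden : ((lam1 τ δ)⁻¹ - 1) * ((lam2 τ δ)⁻¹ - 1) = (δ - τ + 1) / δ := by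
    rw [← lam1_mul_lam2, ← lam1_add_lam2]
    field_simp [left_ne_zero_of_mul hprod, right_ne_zero_of_mul hprod]
    ring
  obtain ⟨n, rfl⟩ : ∃ n, p = n + 1 := ⟨p - 1, by omega⟩
  rw [Hp, Nat.add_sub_cancel, sum_congr rfl fun j _ => sum_congr rfl fun k (hk : k ∈ range (j + 1)) =>
    zpow_sub_mul_zpow_neg _ _ (mem_range_succ_iff.1 hk)]
  rw [sum_range_sum_range_pow_mul_pow_of_pow_eq (inv_pow _ _) (by rw [inv_pow, hpow])
    (inv_injective.ne hne) (inv_ne_one.2 h1) (inv_ne_one.2 h2), hden, div_div_eq_mul_div]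
  ring

lemma Hp_two_sqrt_mul_cos_two_pi_div {δ : ℝ} (hδ0 : 0 < δ) (hδ1 : δ ≠ 1) {p : ℕ} (hp : 3 ≤ p) :
    Hp p (2 * √δ * Real.cos (2 * π / p)) δ
      = ((δ * (1 - (√δ ^ p)⁻¹) / (δ - 2 * √δ * Real.cos (2 * π / p) + 1) : ℝ) : ℂ) := by
  set τ := 2 * √δ * Real.cos (2 * π / p)
  have hs0 : 0 < √δ := Real.sqrt_pos.2 hδ0
  have hs1 : √δ ≠ 1 := by rwa [Ne, Real.sqrt_eq_one]
  have hp3 : (3 : ℝ) ≤ p := by exact_mod_cast hp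
  have hθ : 0 ≤ Real.sin (2 * π / p) := Real.sin_nonneg_of_nonneg_of_le_pi (by positivity)
    (by rw [div_le_iff₀ (by positivity)]; nlinarith [Real.pi_pos])
  have hω : IsPrimitiveRoot (exp ((2 * π / p : ℝ) * I)) p := by
    convert isPrimitiveRoot_exp p (by omega) using 2; push_cast; ring
  obtain ⟨h1, h2⟩ := lam1_lam2_eq_sqrt_mul_exp hδ0.le hθ
  rw [exp_neg] at h2
  have hpow1 : lam1 τ δ ^ p = (√δ ^ p : ℝ) := by rw [h1, mul_pow, hω.pow_eq_one]; push_cast; ring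
  have hpow2 : lam2 τ δ ^ p = (√δ ^ p : ℝ) := by
    rw [h2, mul_pow, inv_pow, hω.pow_eq_one]; push_cast; ring
  have hne : lam1 τ δ ≠ lam2 τ δ := by
    rw [h1, h2, Ne, mul_right_inj' (by exact_mod_cast hs0.ne')]
    intro h
    apply hω.pow_ne_one_of_pos_of_lt two_ne_zero (by omega : 2 < p)
    rw [sq]; nth_rewrite 2 [h]; exact mul_inv_cancel₀ (exp_ne_zero _)
  have hne1 : ∀ z : ℂ, ‖z‖ = √δ → z ≠ 1 := fun z hz h => by
    rw [h, norm_one] at hz; exact hs1 hz.symm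
  rw [Hp_eq_of_lam_pow_eq (by omega) hδ0.ne' (hpow1.trans hpow2.symm) hne
    (hne1 _ (by rw [h1, norm_mul, norm_exp_ofReal_mul_I, Complex.norm_of_nonneg hs0.le, mul_one]))
    (hne1 _ (by rw [h2, norm_mul, norm_inv, norm_exp_ofReal_mul_I, Complex.norm_of_nonneg hs0.le,
      inv_one, mul_one])), hpow1]
  push_cast; rfl

/-- For 0 < δ < 1 and p ≥ 3, setting τ = g_{p/2}(δ) = 2√δ cos(2π/p):
H_p(τ,δ) = (δ^{p/2} − 1)/((δ − τ + 1) δ^{(p−2)/2}), which is negative. -/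
theorem Hp_at_gphalf_neg (δ : ℝ) (hδ0 : 0 < δ) (hδ1 : δ < 1) (p : ℕ) (hp : 3 ≤ p)
    (τ : ℝ) (hτ : τ = 2 * Real.sqrt δ * Real.cos (2 * Real.pi / p)) :
    Hp p τ δ
      = (((δ ^ ((p : ℝ) / 2) - 1) /
          ((δ - τ + 1) * δ ^ (((p : ℝ) - 2) / 2)) : ℝ) : ℂ) ∧
    (δ ^ ((p : ℝ) / 2) - 1) / ((δ - τ + 1) * δ ^ (((p : ℝ) - 2) / 2)) < 0 := by
  have hden : 0 < δ - τ + 1 := by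
    have hτs : τ ≤ 2 * √δ := hτ ▸ mul_le_of_le_one_right (by positivity) (Real.cos_le_one _)
    have hs1 : √δ < 1 := by simpa using Real.sqrt_lt_sqrt hδ0.le hδ1
    nlinarith [Real.sq_sqrt hδ0.le]
  have hrpow : δ ^ ((p : ℝ) / 2) = √δ ^ p := by
    rw [Real.sqrt_eq_rpow, ← Real.rpow_natCast, ← Real.rpow_mul hδ0.le, one_div_mul_eq_div]
  have hreal : δ * (1 - (√δ ^ p)⁻¹) / (δ - τ + 1)
      = (δ ^ ((p : ℝ) / 2) - 1) / ((δ - τ + 1) * δ ^ (((p : ℝ) - 2) / 2)) := by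
    rw [show ((p : ℝ) - 2) / 2 = p / 2 - 1 by ring, Real.rpow_sub_one hδ0.ne', hrpow]
    field_simp
  refine ⟨?_, div_neg_of_neg_of_pos (sub_neg.2 (Real.rpow_lt_one hδ0.le hδ1 (by positivity)))
    (mul_pos hden (Real.rpow_pos_of_pos hδ0 _))⟩
  rw [← hreal, hτ]
  exact Hp_two_sqrt_mul_cos_two_pi_div hδ0 hδ1.ne hp
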